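/- For an arrangement A of n ≥ 2 lines through the origin in C^2, the logarithmic ideal I(A) ⊂ C[a_1,...,a_n,x_1,x_2] is a complete intersection generated by two elements of x-degrees 0 and n-2, namely Σ_{i=1}^n a_i and Σ_{i=2}^n a_i (Q/(f_1 f_i)) (∂f_1/∂x_1 · ∂f_i/∂x_2 − ∂f_1/∂x_2 · ∂f_i/∂x_1). -/

import Mathlib

open MvPolynomial Finset

/-- The `i`-th defining linear form, in `S = ℂ[a_1,…,a_n,x_1,…,x_ℓ]`
(variables `Sum.inl i = a_i`, `Sum.inr j = x_j`). -/
noncomputable def fS {ℓ n : ℕ} (c : Fin n → Fin ℓ → ℂ) (i : Fin n) :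
    MvPolynomial (Fin n ⊕ Fin ℓ) ℂ :=
  ∑ j, C (c i j) * X (Sum.inr j)

/-- The defining polynomial `Q = f_1 ⋯ f_n` of the arrangement, in `S`. -/
noncomputable def QS {ℓ n : ℕ} (c : Fin n → Fin ℓ → ℂ) : MvPolynomial (Fin n ⊕ Fin ℓ) ℂ :=
  ∏ i, fS c i

/-- `Q/f_i`. -/
noncomputable def Qdiv {ℓ n : ℕ} (c : Fin n → Fin ℓ → ℂ) (i : Fin n) :
    MvPolynomial (Fin n ⊕ Fin ℓ) ℂ :=
  ∏ k ∈ univ.erase i, fS c k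

/-- `Q·d_j = ∑_i a_i c_{ij} Q/f_i`, the numerator of the `j`-th coordinate of the
universal 1-form `ω_a = ∑_i a_i df_i/f_i`. -/
noncomputable def Qd {ℓ n : ℕ} (c : Fin n → Fin ℓ → ℂ) (j : Fin ℓ) :
    MvPolynomial (Fin n ⊕ Fin ℓ) ℂ :=
  ∑ i, X (Sum.inl i) * C (c i j) * Qdiv c i

/-- `θ = ∑_j θ_j ∂/∂x_j` (coefficients in `S`) is a logarithmic derivation: `θ(Q) ∈ (Q)`. -/
def IsLogDer {ℓ n : ℕ} (c : Fin n → Fin ℓ → ℂ)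
    (θ : Fin ℓ → MvPolynomial (Fin n ⊕ Fin ℓ) ℂ) : Prop :=
  (∑ j, θ j * pderiv (Sum.inr j) (QS c)) ∈ Ideal.span {QS c}

/-- `g = ⟨θ, ω_a⟩`, i.e. `Q·g = ∑_i a_i (Q/f_i) θ(f_i)`. -/
def PairsWith {ℓ n : ℕ} (c : Fin n → Fin ℓ → ℂ)
    (θ : Fin ℓ → MvPolynomial (Fin n ⊕ Fin ℓ) ℂ)
    (g : MvPolynomial (Fin n ⊕ Fin ℓ) ℂ) : Prop :=
  QS c * g = ∑ i, X (Sum.inl i) * Qdiv c i * (∑ j, θ j * pderiv (Sum.inr j) (fS c i))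

/-- The logarithmic ideal `I(A) = (⟨θ, ω_a⟩ : θ ∈ Der(A))  ⊆ S`. -/
noncomputable def Ilog {ℓ n : ℕ} (c : Fin n → Fin ℓ → ℂ) :
    Ideal (MvPolynomial (Fin n ⊕ Fin ℓ) ℂ) :=
  Ideal.span {g | ∃ θ, IsLogDer c θ ∧ PairsWith c θ g}

/-- The grading of `S` by degree in the `x`-variables. -/
noncomputable def xwt {ℓ n : ℕ} : (Fin n ⊕ Fin ℓ) → ℕ :=
  Sum.elim (fun _ => 0) (fun _ => 1)

/-!
Each `f_i` is a prime of `S`, and distinct lines give non-associated primes. Since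
`θ(Q) = ∑ (Q/f_i) θ(f_i)`, a vector field `θ` is logarithmic iff `f_i ∣ θ(f_i)` for all `i`.
For `E = x_0 θ_1 - x_1 θ_0` one has `c_{i0} E = f_i θ_1 - x_1 θ(f_i)` and
`c_{i1} E = x_0 θ(f_i) - f_i θ_0`, so every `f_i` divides `E`, hence `E = v Q`. Then `θ - v D_2`
has vanishing wedge with the Euler field, so it is `u D_1` because `x_0, x_1` are coprime.
Pairing with `ω_a` is `S`-linear in `θ` and determined by `Q ⟨θ, ω_a⟩` as `Q ≠ 0`;
finally `D_1(f_i) = f_i` and `D_2(f_i) = f_i (Q / (f_{i₀} f_i)) det(c_{i₀}, c_i)` give the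
pairings `g₁` and `g₂`.
-/

theorem Derivation.leibniz_finsetProd {R A M ι : Type*} [CommSemiring R] [CommSemiring A]
    [AddCommMonoid M] [Algebra R A] [Module A M] [Module R M] [IsScalarTower R A M]
    [DecidableEq ι] (D : Derivation R A M) (s : Finset ι) (f : ι → A) :
    D (∏ i ∈ s, f i) = ∑ i ∈ s, (∏ k ∈ s.erase i, f k) • D (f i) := by
  induction s using Finset.induction_on with
  | empty => simp
  | insert a s ha ih =>
    rw [prod_insert ha, D.leibniz, ih, sum_insert ha, erase_insert ha, smul_sum, add_comm]
    congr 1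
    refine sum_congr rfl fun i hi => ?_
    rw [erase_insert_of_ne (ne_of_mem_of_not_mem hi ha).symm,
      prod_insert fun h => ha (mem_of_mem_erase h), smul_smul]

theorem MvPolynomial.exists_eq_X_mul_of_X_mul_eq {σ R : Type*} [CommRing R] [IsDomain R]
    {i j : σ} (hij : i ≠ j) {p q : MvPolynomial σ R} (h : X i * p = X j * q) :
    ∃ u, p = X j * u ∧ q = X i * u := by
  obtain ⟨u, rfl⟩ : X j ∣ p :=
    (X_prime.dvd_or_dvd ⟨q, h⟩).resolve_left (by simpa using hij.symm)
  refine ⟨u, rfl, mul_left_cancel₀ (X_ne_zero j) ?_⟩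
  rw [← h]
  ring

section

variable {ℓ n : ℕ}

theorem coeff_fS (c : Fin n → Fin ℓ → ℂ) (i : Fin n) (j : Fin ℓ) :
    coeff (Finsupp.single (Sum.inr j) 1) (fS c i) = c i j := by
  classical
  simp [fS, coeff_sum, coeff_C_mul, coeff_X, Finsupp.single_eq_single_iff]

theorem fS_ne_zero {c : Fin n → Fin ℓ → ℂ} {i : Fin n} (hc : c i ≠ 0) : fS c i ≠ 0 := by
  obtain ⟨j, hj⟩ := Function.ne_iff.1 hc
  exact fun h => hj (by rw [← coeff_fS c i j, h, coeff_zero, Pi.zero_apply])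

theorem isHomogeneous_fS (c : Fin n → Fin ℓ → ℂ) (i : Fin n) : (fS c i).IsHomogeneous 1 :=
  IsHomogeneous.sum _ _ _ fun _ _ => isHomogeneous_C_mul_X _ _

theorem isWeightedHomogeneous_xwt_fS (c : Fin n → Fin ℓ → ℂ) (i : Fin n) :
    IsWeightedHomogeneous xwt (fS c i) 1 :=
  IsWeightedHomogeneous.sum _ _ _ fun j _ => by
    simpa [xwt] using (isWeightedHomogeneous_C xwt (c i j)).mul
      (isWeightedHomogeneous_X ℂ xwt (Sum.inr j : Fin n ⊕ Fin ℓ))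

theorem totalDegree_fS {c : Fin n → Fin ℓ → ℂ} {i : Fin n} (hc : c i ≠ 0) :
    (fS c i).totalDegree = 1 :=
  (isHomogeneous_fS c i).totalDegree (fS_ne_zero hc)

theorem prime_fS {c : Fin n → Fin ℓ → ℂ} {i : Fin n} (hc : c i ≠ 0) : Prime (fS c i) := by
  obtain ⟨j, hj⟩ := Function.ne_iff.1 hc
  refine (irreducible_of_totalDegree_eq_one (totalDegree_fS hc) fun x hx => ?_).prime
  refine Ne.isUnit fun hx0 => hj ?_
  simpa [hx0, coeff_fS] using hx (Finsupp.single (Sum.inr j) 1)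

theorem exists_eq_smul_of_fS_dvd {c : Fin n → Fin ℓ → ℂ} {i k : Fin n} (hk : c k ≠ 0)
    (h : fS c i ∣ fS c k) : ∃ t : ℂ, c k = t • c i := by
  obtain ⟨r, hr⟩ := h
  have hr0 : r ≠ 0 := by rintro rfl; exact fS_ne_zero hk (by simpa using hr)
  have hi : c i ≠ 0 := by rintro hi; exact fS_ne_zero hk (by rw [hr]; simp [fS, hi])
  have hdeg : r.totalDegree = 0 := by
    have := congrArg totalDegree hr
    rw [totalDegree_mul_of_isDomain (fS_ne_zero hi) hr0, totalDegree_fS hk,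
      totalDegree_fS hi] at this
    omega
  rw [totalDegree_eq_zero_iff_eq_C.1 hdeg] at hr
  refine ⟨coeff 0 r, funext fun j => ?_⟩
  rw [← coeff_fS c k j, hr, mul_comm, coeff_C_mul, coeff_fS, Pi.smul_apply, smul_eq_mul]

theorem fS_not_dvd_fS {c : Fin n → Fin ℓ → ℂ} {i k : Fin n} (hk : c k ≠ 0)
    (hki : ∀ t : ℂ, c k ≠ t • c i) : ¬ fS c i ∣ fS c k := fun h =>
  let ⟨t, ht⟩ := exists_eq_smul_of_fS_dvd hk h
  hki t ht

theorem pairwise_isRelPrime_fS {c : Fin n → Fin ℓ → ℂ} (hnz : ∀ i, c i ≠ 0)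
    (hprop : ∀ i k, i ≠ k → ∀ t : ℂ, c i ≠ t • c k) :
    Pairwise fun i k => IsRelPrime (fS c i) (fS c k) := fun i k hik =>
  (prime_fS (hnz i)).irreducible.isRelPrime_iff_not_dvd.2
    (fS_not_dvd_fS (hnz k) (hprop k i hik.symm))

theorem fS_mul_Qdiv (c : Fin n → Fin ℓ → ℂ) (i : Fin n) : fS c i * Qdiv c i = QS c :=
  mul_prod_erase _ _ (mem_univ i)

theorem fS_dvd_Qdiv (c : Fin n → Fin ℓ → ℂ) {i k : Fin n} (hik : i ≠ k) : fS c i ∣ Qdiv c k :=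
  dvd_prod_of_mem _ (mem_erase.2 ⟨hik, mem_univ i⟩)

theorem fS_not_dvd_Qdiv {c : Fin n → Fin ℓ → ℂ} (hnz : ∀ i, c i ≠ 0)
    (hprop : ∀ i k, i ≠ k → ∀ t : ℂ, c i ≠ t • c k) (i : Fin n) : ¬ fS c i ∣ Qdiv c i := by
  intro h
  obtain ⟨k, hk, hdk⟩ := ((prime_fS (hnz i)).dvd_finsetProd_iff _).1 h
  exact fS_not_dvd_fS (hnz k) (hprop k i (mem_erase.1 hk).1) hdk

theorem QS_ne_zero {c : Fin n → Fin ℓ → ℂ} (hnz : ∀ i, c i ≠ 0) : QS c ≠ 0 :=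
  prod_ne_zero_iff.2 fun i _ => fS_ne_zero (hnz i)

noncomputable def vectorField (θ : Fin ℓ → MvPolynomial (Fin n ⊕ Fin ℓ) ℂ) :
    Derivation ℂ (MvPolynomial (Fin n ⊕ Fin ℓ) ℂ) (MvPolynomial (Fin n ⊕ Fin ℓ) ℂ) :=
  ∑ j, θ j • pderiv (Sum.inr j)

theorem vectorField_apply (θ : Fin ℓ → MvPolynomial (Fin n ⊕ Fin ℓ) ℂ)
    (p : MvPolynomial (Fin n ⊕ Fin ℓ) ℂ) :
    vectorField θ p = ∑ j, θ j * pderiv (Sum.inr j) p := by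
  change Derivation.coeFnAddMonoidHom (∑ j, θ j • pderiv (Sum.inr j)) p = _
  simp [map_sum, Finset.sum_apply]

theorem vectorField_fS (θ : Fin ℓ → MvPolynomial (Fin n ⊕ Fin ℓ) ℂ)
    (c : Fin n → Fin ℓ → ℂ) (i : Fin n) :
    vectorField θ (fS c i) = ∑ j, θ j * C (c i j) := by
  classical
  simp [vectorField_apply, fS, pderiv_X, Pi.single_apply, mul_comm]

theorem vectorField_QS (θ : Fin ℓ → MvPolynomial (Fin n ⊕ Fin ℓ) ℂ) (c : Fin n → Fin ℓ → ℂ) :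
    vectorField θ (QS c) = ∑ i, Qdiv c i * vectorField θ (fS c i) :=
  (vectorField θ).leibniz_finsetProd _ _

theorem isLogDer_iff (c : Fin n → Fin ℓ → ℂ) (θ : Fin ℓ → MvPolynomial (Fin n ⊕ Fin ℓ) ℂ) :
    IsLogDer c θ ↔ QS c ∣ vectorField θ (QS c) := by
  rw [IsLogDer, vectorField_apply, Ideal.mem_span_singleton]

theorem pairsWith_iff (c : Fin n → Fin ℓ → ℂ) (θ : Fin ℓ → MvPolynomial (Fin n ⊕ Fin ℓ) ℂ)
    (g : MvPolynomial (Fin n ⊕ Fin ℓ) ℂ) :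
    PairsWith c θ g ↔ QS c * g = ∑ i, X (Sum.inl i) * Qdiv c i * vectorField θ (fS c i) := by
  simp only [PairsWith, vectorField_apply]

theorem isLogDer_of_forall_dvd {c : Fin n → Fin ℓ → ℂ} {θ : Fin ℓ → MvPolynomial (Fin n ⊕ Fin ℓ) ℂ}
    (h : ∀ i, fS c i ∣ vectorField θ (fS c i)) : IsLogDer c θ := by
  rw [isLogDer_iff, vectorField_QS]
  refine dvd_sum fun i _ => ?_
  rw [← fS_mul_Qdiv c i, mul_comm (fS c i)]
  exact mul_dvd_mul_left _ (h i)

theorem IsLogDer.fS_dvd {c : Fin n → Fin ℓ → ℂ} (hnz : ∀ i, c i ≠ 0)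
    (hprop : ∀ i k, i ≠ k → ∀ t : ℂ, c i ≠ t • c k)
    {θ : Fin ℓ → MvPolynomial (Fin n ⊕ Fin ℓ) ℂ} (hθ : IsLogDer c θ) (i : Fin n) :
    fS c i ∣ vectorField θ (fS c i) := by
  have hQ : fS c i ∣ vectorField θ (QS c) :=
    (Dvd.intro _ (fS_mul_Qdiv c i)).trans ((isLogDer_iff c θ).1 hθ)
  rw [vectorField_QS, ← add_sum_erase _ _ (mem_univ i)] at hQ
  have hrest : fS c i ∣ ∑ k ∈ univ.erase i, Qdiv c k * vectorField θ (fS c k) :=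
    dvd_sum fun k hk => (fS_dvd_Qdiv c (mem_erase.1 hk).1.symm).mul_right _
  exact ((prime_fS (hnz i)).dvd_or_dvd ((dvd_add_left hrest).1 hQ)).resolve_left
    (fS_not_dvd_Qdiv hnz hprop i)

theorem pairsWith_of_eq_mul {c : Fin n → Fin ℓ → ℂ} {θ : Fin ℓ → MvPolynomial (Fin n ⊕ Fin ℓ) ℂ}
    {h : Fin n → MvPolynomial (Fin n ⊕ Fin ℓ) ℂ}
    (hθ : ∀ i, vectorField θ (fS c i) = fS c i * h i) :
    PairsWith c θ (∑ i, X (Sum.inl i) * h i) := by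
  rw [pairsWith_iff, mul_sum]
  refine sum_congr rfl fun i _ => ?_
  rw [hθ, ← fS_mul_Qdiv c i]
  ring

theorem PairsWith.unique {c : Fin n → Fin ℓ → ℂ} (hnz : ∀ i, c i ≠ 0)
    {θ : Fin ℓ → MvPolynomial (Fin n ⊕ Fin ℓ) ℂ} {g g' : MvPolynomial (Fin n ⊕ Fin ℓ) ℂ}
    (hg : PairsWith c θ g) (hg' : PairsWith c θ g') : g = g' :=
  mul_left_cancel₀ (QS_ne_zero hnz) (hg.trans hg'.symm)

theorem vectorField_smul_add_smul (θ θ' : Fin ℓ → MvPolynomial (Fin n ⊕ Fin ℓ) ℂ)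
    (u v p : MvPolynomial (Fin n ⊕ Fin ℓ) ℂ) :
    vectorField (u • θ + v • θ') p = u * vectorField θ p + v * vectorField θ' p := by
  simp only [vectorField_apply, mul_sum, ← sum_add_distrib, Pi.add_apply, Pi.smul_apply,
    smul_eq_mul]
  exact sum_congr rfl fun _ _ => by ring

theorem PairsWith.smul_add_smul {c : Fin n → Fin ℓ → ℂ}
    {θ θ' : Fin ℓ → MvPolynomial (Fin n ⊕ Fin ℓ) ℂ} {g g' : MvPolynomial (Fin n ⊕ Fin ℓ) ℂ}
    (hg : PairsWith c θ g) (hg' : PairsWith c θ' g') (u v : MvPolynomial (Fin n ⊕ Fin ℓ) ℂ) :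
    PairsWith c (u • θ + v • θ') (u * g + v * g') := by
  rw [pairsWith_iff] at hg hg' ⊢
  calc QS c * (u * g + v * g') = u * (QS c * g) + v * (QS c * g') := by ring
    _ = _ := by
      rw [hg, hg', mul_sum, mul_sum, ← sum_add_distrib]
      exact sum_congr rfl fun i _ => by rw [vectorField_smul_add_smul]; ring

noncomputable def euler : Fin ℓ → MvPolynomial (Fin n ⊕ Fin ℓ) ℂ :=
  fun j => X (Sum.inr j)

theorem vectorField_euler_fS (c : Fin n → Fin ℓ → ℂ) (i : Fin n) :
    vectorField euler (fS c i) = fS c i := by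
  rw [vectorField_fS, fS]
  simp only [euler, mul_comm]

theorem isLogDer_euler (c : Fin n → Fin ℓ → ℂ) : IsLogDer c euler :=
  isLogDer_of_forall_dvd fun i => by rw [vectorField_euler_fS]

theorem pairsWith_euler (c : Fin n → Fin ℓ → ℂ) : PairsWith c euler (∑ i, X (Sum.inl i)) := by
  simpa using pairsWith_of_eq_mul (h := fun _ => 1) fun i => by rw [vectorField_euler_fS, mul_one]

theorem fS_two (c : Fin n → Fin 2 → ℂ) (i : Fin n) :
    fS c i = X (Sum.inr 0) * C (c i 0) + X (Sum.inr 1) * C (c i 1) := by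
  rw [fS, Fin.sum_univ_two, mul_comm, mul_comm (C (c i 1))]

/-- The derivation `D_2` of the arrangement, built on the line `f_{i₀}` in place of `f_1`. -/
noncomputable def hamiltonian (c : Fin n → Fin 2 → ℂ) (i₀ : Fin n) :
    Fin 2 → MvPolynomial (Fin n ⊕ Fin 2) ℂ :=
  ![-(C (c i₀ 1) * Qdiv c i₀), C (c i₀ 0) * Qdiv c i₀]

theorem vectorField_hamiltonian_fS (c : Fin n → Fin 2 → ℂ) (i₀ i : Fin n) :
    vectorField (hamiltonian c i₀) (fS c i)
      = fS c i *
        ((∏ k ∈ (univ.erase i₀).erase i, fS c k) * C (c i₀ 0 * c i 1 - c i₀ 1 * c i 0)) := by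
  have h : vectorField (hamiltonian c i₀) (fS c i)
      = Qdiv c i₀ * C (c i₀ 0 * c i 1 - c i₀ 1 * c i 0) := by
    rw [vectorField_fS, Fin.sum_univ_two]
    simp only [hamiltonian, Matrix.cons_val_zero, Matrix.cons_val_one, map_sub, map_mul]
    ring
  rcases eq_or_ne i i₀ with rfl | hi
  · rw [h, show c i 0 * c i 1 - c i 1 * c i 0 = 0 by ring, C_0, mul_zero, mul_zero, mul_zero]
  · rw [h, Qdiv, ← mul_prod_erase (univ.erase i₀) (fS c) (mem_erase.2 ⟨hi, mem_univ i⟩)]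
    ring

theorem isLogDer_hamiltonian (c : Fin n → Fin 2 → ℂ) (i₀ : Fin n) :
    IsLogDer c (hamiltonian c i₀) :=
  isLogDer_of_forall_dvd fun i => Dvd.intro _ (vectorField_hamiltonian_fS c i₀ i).symm

theorem pairsWith_hamiltonian (c : Fin n → Fin 2 → ℂ) (i₀ : Fin n) :
    PairsWith c (hamiltonian c i₀) (∑ i ∈ univ.erase i₀, X (Sum.inl i) *
      (∏ k ∈ (univ.erase i₀).erase i, fS c k) * C (c i₀ 0 * c i 1 - c i₀ 1 * c i 0)) := by
  convert pairsWith_of_eq_mul (vectorField_hamiltonian_fS c i₀) using 1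
  rw [← sum_erase univ (a := i₀) (by simp [mul_comm (c i₀ 0)])]
  exact sum_congr rfl fun _ _ => mul_assoc _ _ _

theorem fS_dvd_wedge_euler {c : Fin n → Fin 2 → ℂ} {i : Fin n} (hc : c i ≠ 0)
    {θ : Fin 2 → MvPolynomial (Fin n ⊕ Fin 2) ℂ} (h : fS c i ∣ vectorField θ (fS c i)) :
    fS c i ∣ X (Sum.inr 0) * θ 1 - X (Sum.inr 1) * θ 0 := by
  have hθf := vectorField_fS θ c i
  rw [Fin.sum_univ_two] at hθf
  rcases Fin.exists_fin_two.1 (Function.ne_iff.1 hc) with h₀ | h₁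
  · have hE : C (c i 0) * (X (Sum.inr 0) * θ 1 - X (Sum.inr 1) * θ 0)
        = fS c i * θ 1 - X (Sum.inr 1) * vectorField θ (fS c i) := by
      rw [hθf, fS_two]; ring
    exact ((Ne.isUnit h₀).map C).dvd_mul_left.1 (hE ▸ (dvd_mul_right _ _).sub (h.mul_left _))
  · have hE : C (c i 1) * (X (Sum.inr 0) * θ 1 - X (Sum.inr 1) * θ 0)
        = X (Sum.inr 0) * vectorField θ (fS c i) - fS c i * θ 0 := by
      rw [hθf, fS_two]; ring
    exact ((Ne.isUnit h₁).map C).dvd_mul_left.1 (hE ▸ (h.mul_left _).sub (dvd_mul_right _ _))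

theorem IsLogDer.exists_eq_euler_add_hamiltonian {c : Fin n → Fin 2 → ℂ} (hnz : ∀ i, c i ≠ 0)
    (hprop : ∀ i k, i ≠ k → ∀ t : ℂ, c i ≠ t • c k) (i₀ : Fin n)
    {θ : Fin 2 → MvPolynomial (Fin n ⊕ Fin 2) ℂ} (hθ : IsLogDer c θ) :
    ∃ u v : MvPolynomial (Fin n ⊕ Fin 2) ℂ, θ = u • euler + v • hamiltonian c i₀ := by
  obtain ⟨v, hv⟩ : QS c ∣ X (Sum.inr 0) * θ 1 - X (Sum.inr 1) * θ 0 :=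
    Fintype.prod_dvd_of_isRelPrime (pairwise_isRelPrime_fS hnz hprop) fun i =>
      fS_dvd_wedge_euler (hnz i) (hθ.fS_dvd hnz hprop i)
  have hQ : QS c = (X (Sum.inr 0) * C (c i₀ 0) + X (Sum.inr 1) * C (c i₀ 1)) * Qdiv c i₀ := by
    rw [← fS_mul_Qdiv c i₀, fS_two]
  obtain ⟨u, h₁, h₀⟩ := exists_eq_X_mul_of_X_mul_eq (i := Sum.inr 0) (j := Sum.inr 1) (by simp)
    (p := θ 1 - v * (C (c i₀ 0) * Qdiv c i₀)) (q := θ 0 + v * (C (c i₀ 1) * Qdiv c i₀))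
    (by linear_combination hv + v * hQ)
  refine ⟨u, v, funext <| Fin.forall_fin_two.2 ⟨?_, ?_⟩⟩ <;>
    simp only [euler, hamiltonian, Pi.add_apply, Pi.smul_apply, smul_eq_mul,
      Matrix.cons_val_zero, Matrix.cons_val_one]
  · linear_combination h₀
  · linear_combination h₁

theorem isWeightedHomogeneous_prod_fS (c : Fin n → Fin ℓ → ℂ) (s : Finset (Fin n)) :
    IsWeightedHomogeneous xwt (∏ k ∈ s, fS c k) #s := by
  simpa using IsWeightedHomogeneous.prod s (fS c) (fun _ => 1) fun k _ =>
    isWeightedHomogeneous_xwt_fS c k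

theorem isWeightedHomogeneous_pairing_hamiltonian (c : Fin n → Fin 2 → ℂ) (i₀ : Fin n) :
    IsWeightedHomogeneous xwt (∑ i ∈ univ.erase i₀, X (Sum.inl i) *
      (∏ k ∈ (univ.erase i₀).erase i, fS c k) * C (c i₀ 0 * c i 1 - c i₀ 1 * c i 0)) (n - 2) := by
  refine IsWeightedHomogeneous.sum _ _ _ fun i hi => ?_
  have hcard : #((univ.erase i₀).erase i) = n - 2 := by
    rw [card_erase_of_mem hi, card_erase_of_mem (mem_univ _), card_univ, Fintype.card_fin]
    omega
  have hX : IsWeightedHomogeneous xwt (X (Sum.inl i) : MvPolynomial (Fin n ⊕ Fin 2) ℂ) 0 :=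
    isWeightedHomogeneous_X ℂ xwt (Sum.inl i)
  have := (hX.mul (isWeightedHomogeneous_prod_fS c ((univ.erase i₀).erase i))).mul
    (isWeightedHomogeneous_C xwt (c i₀ 0 * c i 1 - c i₀ 1 * c i 0))
  rwa [hcard, zero_add, add_zero] at this

end

theorem pencil_logarithmic_ideal_general
    (n : ℕ) (c : Fin n → Fin 2 → ℂ)
    (hnz : ∀ i, c i ≠ 0)
    (hprop : ∀ i k, i ≠ k → ∀ t : ℂ, c i ≠ t • c k)
    (i₀ : Fin n)
    (g₁ g₂ : MvPolynomial (Fin n ⊕ Fin 2) ℂ)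
    (hg₁ : g₁ = ∑ i, X (Sum.inl i))
    (hg₂ : g₂ = ∑ i ∈ (univ.erase i₀), X (Sum.inl i) *
        (∏ k ∈ (univ.erase i₀).erase i, fS c k) *
        C (c i₀ 0 * c i 1 - c i₀ 1 * c i 0)) :
    Ilog c = Ideal.span {g₁, g₂} ∧
      IsWeightedHomogeneous xwt g₁ 0 ∧ IsWeightedHomogeneous xwt g₂ (n - 2) := by
  subst hg₁ hg₂
  refine ⟨le_antisymm ?_ ?_, IsWeightedHomogeneous.sum _ _ _ fun i _ =>
    isWeightedHomogeneous_X ℂ xwt (Sum.inl i), isWeightedHomogeneous_pairing_hamiltonian c i₀⟩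
  · refine Ideal.span_le.2 fun g ⟨θ, hθ, hg⟩ => ?_
    obtain ⟨u, v, rfl⟩ := hθ.exists_eq_euler_add_hamiltonian hnz hprop i₀
    rw [hg.unique hnz ((pairsWith_euler c).smul_add_smul (pairsWith_hamiltonian c i₀) u v)]
    exact Ideal.mem_span_pair.2 ⟨u, v, rfl⟩
  · rw [Ideal.span_le, Set.insert_subset_iff, Set.singleton_subset_iff]
    exact ⟨Ideal.subset_span ⟨_, isLogDer_euler c, pairsWith_euler c⟩,
      Ideal.subset_span ⟨_, isLogDer_hamiltonian c i₀, pairsWith_hamiltonian c i₀⟩⟩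

theorem pencil_logarithmic_ideal
    (n : ℕ) (hn : 2 ≤ n) (c : Fin n → Fin 2 → ℂ)
    (hnz : ∀ i, c i ≠ 0)
    (hprop : ∀ i k, i ≠ k → ∀ t : ℂ, c i ≠ t • c k)
    (i₀ : Fin n) (hi₀ : (i₀ : ℕ) = 0)
    (g₁ g₂ : MvPolynomial (Fin n ⊕ Fin 2) ℂ)
    (hg₁ : g₁ = ∑ i, X (Sum.inl i))
    (hg₂ : g₂ = ∑ i ∈ (univ.erase i₀), X (Sum.inl i) *
        (∏ k ∈ (univ.erase i₀).erase i, fS c k) *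
        C (c i₀ 0 * c i 1 - c i₀ 1 * c i 0)) :
    Ilog c = Ideal.span {g₁, g₂} ∧
      IsWeightedHomogeneous xwt g₁ 0 ∧ IsWeightedHomogeneous xwt g₂ (n - 2) :=
  pencil_logarithmic_ideal_general n c hnz hprop i₀ g₁ g₂ hg₁ hg₂
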